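/- arXiv:1907.09323 — 4 statements merged into one kernel-verified Lean document; each statement's English description precedes it below -/
import Mathlib

section
/- Let p be a real polynomial of degree k, α a root of multiplicity d with 2 ≤ d ≤ k-1, q the divided difference polynomial of p, and define N(x,y) = y·q(x,y) - p(y). Then N(x,y) = α·q(x,y) + N₁(x,y), where N₁(x,y) = (x-α)(y-α) Σ_{m=d}^{k} (p^(m)(α)/m!) Σ_{ℓ=1}^{m-1} (x-α)^(m-1-ℓ) (y-α)^(ℓ-1). -/
open Polynomial Finset

lemma iterDeriv_eval (p : ℝ[X]) (n : ℕ) :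
    iteratedDeriv n (fun t => p.eval t) = fun t => (Polynomial.derivative^[n] p).eval t := by
  induction n with
  | zero => simp [iteratedDeriv_zero]
  | succ n ih =>
      rw [iteratedDeriv_succ, ih]
      funext t
      rw [Function.iterate_succ_apply']
      exact Polynomial.deriv (p := Polynomial.derivative^[n] p)

lemma hasse_eq (p : ℝ[X]) (α : ℝ) (n : ℕ) :
    iteratedDeriv n (fun t => p.eval t) α / (Nat.factorial n : ℝ) =
      (Polynomial.hasseDeriv n p).eval α := by
  rw [iterDeriv_eval]
  have h := congrFun (Polynomial.factorial_smul_hasseDeriv (R := ℝ) n) p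
  simp only [LinearMap.smul_apply] at h
  rw [← h]
  simp [nsmul_eq_mul, Nat.factorial_ne_zero, mul_comm, mul_div_assoc,
    div_self, Nat.cast_ne_zero]

lemma taylor_expand (p : ℝ[X]) (α t : ℝ) :
    p.eval t = ∑ m ∈ Finset.range (p.natDegree + 1),
      (Polynomial.hasseDeriv m p).eval α * (t - α) ^ m := by
  conv_lhs => rw [← Polynomial.taylor_eval_sub α p t]
  rw [Polynomial.eval_eq_sum_range' (n := p.natDegree + 1)
    (by rw [Polynomial.natDegree_taylor]; omega)]
  refine Finset.sum_congr rfl fun m _ => ?_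
  rw [Polynomial.taylor_coeff]

lemma key_alg (a b : ℝ) (m : ℕ) (hm : 1 ≤ m) :
    b * (∑ i ∈ Finset.range m, a ^ i * b ^ (m - 1 - i)) - b ^ m
      = a * b * ∑ ℓ ∈ Finset.Icc 1 (m - 1), a ^ (m - 1 - ℓ) * b ^ (ℓ - 1) := by
  obtain ⟨n, rfl⟩ := Nat.exists_eq_add_of_le hm
  have h1 : (1 + n) - 1 = n := by omega
  rw [h1, Nat.add_comm 1 n]
  rw [Finset.sum_range_succ' (fun i => a ^ i * b ^ (n - i)) n]
  have h2 : ∑ ℓ ∈ Finset.Icc 1 n, a ^ (n - ℓ) * b ^ (ℓ - 1)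
      = ∑ j ∈ Finset.range n, a ^ (n - (j+1)) * b ^ j := by
    rw [← Finset.Ico_add_one_right_eq_Icc, Finset.sum_Ico_eq_sum_range]
    simp [Nat.add_comm 1]
  rw [h2, Finset.mul_sum]
  rw [← Finset.sum_range_reflect (fun j => a * b * (a ^ (n - (j+1)) * b ^ j)) n]
  have hL : b * (∑ i ∈ Finset.range n, a ^ (i+1) * b ^ (n - (i+1)) + a ^ 0 * b ^ (n - 0)) - b ^ (n+1)
      = ∑ i ∈ Finset.range n, b * (a ^ (i+1) * b ^ (n - (i+1))) := by
    rw [mul_add, Finset.mul_sum]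
    have : b * (a ^ 0 * b ^ (n - 0)) = b ^ (n+1) := by
      simp [pow_succ, mul_comm]
    rw [this]; ring
  rw [hL]
  refine Finset.sum_congr rfl fun i hi => ?_
  simp only [Finset.mem_range] at hi
  rw [show n - (n - 1 - i + 1) = i by omega, show n - (i+1) = n - 1 - i by omega,
    pow_succ]
  ring


/-- With `α` a root of `p` of multiplicity `d`, `2 ≤ d ≤ k-1`, and `N(x,y) = y q(x,y) - p(y)`,
one has `N(x,y) = α q(x,y) + N₁(x,y)` where
`N₁(x,y) = (x-α)(y-α) ∑_{m=d}^{k} (p^(m)(α)/m!) ∑_{ℓ=1}^{m-1} (x-α)^(m-1-ℓ) (y-α)^(ℓ-1)`. -/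
theorem secant_numerator_decomposition (p : Polynomial ℝ) (q : ℝ → ℝ → ℝ)
    (hcont : Continuous fun z : ℝ × ℝ => q z.1 z.2)
    (hdiv : ∀ x y : ℝ, p.eval x - p.eval y = (x - y) * q x y)
    (α : ℝ) (d : ℕ) (hd2 : 2 ≤ d) (hdk : d ≤ p.natDegree - 1)
    (hroot : ∀ j : ℕ, j < d → iteratedDeriv j (fun t => p.eval t) α = 0)
    (hd0 : iteratedDeriv d (fun t => p.eval t) α ≠ 0)
    (x y : ℝ) :
    y * q x y - p.eval y =
      α * q x y + (x - α) * (y - α) *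
        ∑ m ∈ Finset.Icc d p.natDegree,
          iteratedDeriv m (fun t => p.eval t) α / (Nat.factorial m) *
            ∑ ℓ ∈ Finset.Icc 1 (m - 1), (x - α) ^ (m - 1 - ℓ) * (y - α) ^ (ℓ - 1) := by
  set K := p.natDegree with hK
  set h : ℕ → ℝ := fun m => (Polynomial.hasseDeriv m p).eval α with hh
  set Q : ℝ → ℝ → ℝ := fun u v => ∑ m ∈ Finset.range (K + 1),
      h m * ∑ i ∈ Finset.range m, (u - α) ^ i * (v - α) ^ (m - 1 - i) with hQ
  -- q = Q
  have hqQ : ∀ u v : ℝ, q u v = Q u v := by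
    intro u v
    have hcQ : Continuous fun u => Q u v := by
      simp only [hQ]
      exact continuous_finset_sum _ fun m _ => (continuous_const.mul
        (continuous_finset_sum _ fun i _ =>
          (((continuous_id.sub continuous_const).pow i).mul continuous_const)))
    have hcq : Continuous fun u => q u v :=
      hcont.comp (continuous_id.prodMk continuous_const)
    have heq : Set.EqOn (fun u => q u v) (fun u => Q u v) ({v}ᶜ : Set ℝ) := by
      intro u hu
      simp only [Set.mem_compl_iff, Set.mem_singleton_iff] at hu
      have huv : u - v ≠ 0 := sub_ne_zero.mpr hu
      have h1 : (u - v) * q u v = (u - v) * Q u v := by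
        rw [← hdiv u v, taylor_expand p α u, taylor_expand p α v, ← Finset.sum_sub_distrib,
          hQ, Finset.mul_sum]
        refine Finset.sum_congr rfl fun m _ => ?_
        have hg := geom_sum₂_mul (u - α) (v - α) m
        have huv2 : (u - α) - (v - α) = u - v := by ring
        rw [huv2] at hg
        linear_combination -((Polynomial.hasseDeriv m p).eval α) * hg
      exact mul_left_cancel₀ huv h1
    exact congrFun (hcq.ext_on (dense_compl_singleton v) hcQ heq) u
  rw [hqQ x y]
  have hcoef : ∀ m, iteratedDeriv m (fun t => p.eval t) α / (Nat.factorial m : ℝ) = h m :=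
    fun m => hasse_eq p α m
  simp only [hcoef]
  have hzero : ∀ m, m < d → h m = 0 := by
    intro m hm
    rw [← hcoef m, hroot m hm, zero_div]
  rw [taylor_expand p α y]
  have hdK : d ≤ K := by omega
  have hsub : Finset.Icc d K ⊆ Finset.range (K + 1) := by
    intro m hm; simp only [Finset.mem_Icc] at hm; simp only [Finset.mem_range]; omega
  have main : ∑ m ∈ Finset.range (K + 1),
        h m * ((y - α) * (∑ i ∈ Finset.range m, (x - α) ^ i * (y - α) ^ (m - 1 - i))
          - (y - α) ^ m)
      = (x - α) * (y - α) * ∑ m ∈ Finset.Icc d K,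
          h m * ∑ ℓ ∈ Finset.Icc 1 (m - 1), (x - α) ^ (m - 1 - ℓ) * (y - α) ^ (ℓ - 1) := by
    rw [← Finset.sum_subset hsub (fun m hmr hm => by
      have hmd : m < d := by
        simp only [Finset.mem_Icc, not_and, not_le] at hm
        simp only [Finset.mem_range] at hmr
        omega
      rw [hzero m hmd, zero_mul])]
    rw [Finset.mul_sum]
    refine Finset.sum_congr rfl fun m hm => ?_
    simp only [Finset.mem_Icc] at hm
    rw [key_alg (x - α) (y - α) m (by omega)]
    ring
  have step1 : y * Q x y - (∑ m ∈ Finset.range (K + 1), h m * (y - α) ^ m) - α * Q x y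
      = ∑ m ∈ Finset.range (K + 1),
        h m * ((y - α) * (∑ i ∈ Finset.range m, (x - α) ^ i * (y - α) ^ (m - 1 - i))
          - (y - α) ^ m) := by
    rw [hQ]
    simp only []
    rw [Finset.mul_sum _ _ y, Finset.mul_sum _ _ α, ← Finset.sum_sub_distrib,
      ← Finset.sum_sub_distrib]
    refine Finset.sum_congr rfl fun m hm => ?_
    ring
  linarith [step1, main]
end

section
/- Let p be a real polynomial with distinct real roots α₁ ≠ α₂ and let q be its divided difference polynomial. Then for all integers m, ℓ with 0 < ℓ < m, (∂^m q/∂x^(m-ℓ)∂y^ℓ)(α₁,α₂) = (1/(α₁-α₂)) · (ℓ · (∂^(m-1) q/∂x^(m-ℓ)∂y^(ℓ-1))(α₁,α₂) - (m-ℓ) · (∂^(m-1) q/∂x^(m-ℓ-1)∂y^ℓ)(α₁,α₂)). -/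
open Polynomial Finset

/-- Iterated derivative of a polynomial evaluation function. -/
private lemma iteratedDeriv_polyEval (P : Polynomial ℝ) (n : ℕ) :
    iteratedDeriv n (fun y : ℝ => P.eval y) = fun y => (derivative^[n] P).eval y := by
  induction n with
  | zero => simp
  | succ n ih =>
    rw [iteratedDeriv_succ, ih]
    funext y
    rw [Function.iterate_succ_apply', Polynomial.deriv]

/-- Iterated derivative of a product with a linear factor. -/
private lemma iter_deriv_linfac (u : Polynomial ℝ) (b : ℝ) (hu : derivative u = C b)
    (Q : Polynomial ℝ) (k : ℕ) :
    derivative^[k + 1] (u * Q) =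
      u * derivative^[k + 1] Q + C (((k : ℝ) + 1) * b) * derivative^[k] Q := by
  induction k with
  | zero =>
    simp only [zero_add, Function.iterate_one, Function.iterate_zero, id, derivative_mul, hu,
      Nat.cast_zero, one_mul]
    ring
  | succ k ih =>
    rw [Function.iterate_succ_apply' derivative (k + 1) (u * Q), ih, derivative_add,
      derivative_mul, hu, derivative_mul, derivative_C,
      ← Function.iterate_succ_apply' derivative (k + 1) Q,
      ← Function.iterate_succ_apply' derivative k Q]
    push_cast
    rw [show C (((k : ℝ) + 1 + 1) * b) = C b + C (((k : ℝ) + 1) * b) by rw [← C_add]; ring_nf]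
    ring

/-- The divided difference polynomial `q(x,y) = ∑_{m=1}^k a_m ∑_{ℓ=0}^{m-1} x^(m-1-ℓ) y^ℓ`. -/
noncomputable def secQ (p : Polynomial ℝ) (x y : ℝ) : ℝ :=
  ∑ m ∈ Finset.Icc 1 p.natDegree,
    p.coeff m * ∑ ℓ ∈ Finset.range m, x ^ (m - 1 - ℓ) * y ^ ℓ

/-- For distinct real roots `α₁ ≠ α₂` of `p` and integers `0 < ℓ < m`,
`(∂^m q/∂x^(m-ℓ)∂y^ℓ)(α₁,α₂) = (1/(α₁-α₂)) (ℓ (∂^(m-1) q/∂x^(m-ℓ)∂y^(ℓ-1))(α₁,α₂)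
  - (m-ℓ) (∂^(m-1) q/∂x^(m-ℓ-1)∂y^ℓ)(α₁,α₂))`. -/
theorem secant_q_mixed_recursion (p : Polynomial ℝ) (α₁ α₂ : ℝ)
    (h₁ : p.eval α₁ = 0) (h₂ : p.eval α₂ = 0) (hne : α₁ ≠ α₂)
    (m ℓ : ℕ) (hℓ : 0 < ℓ) (hℓm : ℓ < m) :
    iteratedDeriv (m - ℓ) (fun x => iteratedDeriv ℓ (fun y => secQ p x y) α₂) α₁ =
      (1 / (α₁ - α₂)) *
        (ℓ * iteratedDeriv (m - ℓ)
            (fun x => iteratedDeriv (ℓ - 1) (fun y => secQ p x y) α₂) α₁ -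
         (m - ℓ : ℕ) * iteratedDeriv (m - ℓ - 1)
            (fun x => iteratedDeriv ℓ (fun y => secQ p x y) α₂) α₁) := by
  classical
  obtain ⟨t, rfl⟩ : ∃ t, ℓ = t + 1 := ⟨ℓ - 1, (Nat.succ_pred_eq_of_pos hℓ).symm⟩
  obtain ⟨s, hs⟩ : ∃ s, m - (t + 1) = s + 1 :=
    ⟨m - (t + 1) - 1, (Nat.succ_pred_eq_of_pos (by omega)).symm⟩
  have hne' : α₁ - α₂ ≠ 0 := sub_ne_zero_of_ne hne
  set Q : ℝ → Polynomial ℝ := fun x => ∑ n ∈ Finset.Icc 1 p.natDegree,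
      C (p.coeff n) * ∑ j ∈ Finset.range n, C (x ^ (n - 1 - j)) * X ^ j with hQ
  have evalQ : ∀ x y : ℝ, (Q x).eval y = secQ p x y := by
    intro x y
    simp [hQ, secQ, eval_finset_sum]
  -- the key algebraic identity (x - y) q(x,y) = p(x) - p(y)
  have key : ∀ x y : ℝ, (x - y) * secQ p x y = p.eval x - p.eval y := by
    intro x y
    rw [secQ, Finset.mul_sum]
    have step : ∀ n ∈ Finset.Icc 1 p.natDegree,
        (x - y) * (p.coeff n * ∑ j ∈ Finset.range n, x ^ (n - 1 - j) * y ^ j)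
          = p.coeff n * (x ^ n - y ^ n) := by
      intro n _
      have h2 : (∑ j ∈ Finset.range n, x ^ (n - 1 - j) * y ^ j)
          = ∑ i ∈ Finset.range n, y ^ i * x ^ (n - 1 - i) :=
        Finset.sum_congr rfl fun i _ => mul_comm _ _
      have h3 := geom_sum₂_mul y x n
      calc (x - y) * (p.coeff n * ∑ j ∈ Finset.range n, x ^ (n - 1 - j) * y ^ j)
          = p.coeff n * (-((∑ i ∈ Finset.range n, y ^ i * x ^ (n - 1 - i)) * (y - x))) := by
            rw [h2]; ring
        _ = p.coeff n * (x ^ n - y ^ n) := by rw [h3]; ring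
    rw [Finset.sum_congr rfl step]
    have expand : ∑ n ∈ Finset.Icc 1 p.natDegree, p.coeff n * (x ^ n - y ^ n)
        = ∑ n ∈ Finset.range (p.natDegree + 1), p.coeff n * (x ^ n - y ^ n) := by
      apply Finset.sum_subset
      · intro n hn
        simp only [Finset.mem_Icc] at hn
        simp only [Finset.mem_range]
        omega
      · intro n hn hn'
        simp only [Finset.mem_range] at hn
        simp only [Finset.mem_Icc] at hn'
        have : n = 0 := by omega
        simp [this]
    rw [expand, eval_eq_sum_range, eval_eq_sum_range, ← Finset.sum_sub_distrib]
    exact Finset.sum_congr rfl fun n _ => by ring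
  have polyId : ∀ x : ℝ, (C x - X) * Q x = C (p.eval x) - p := by
    intro x
    apply Polynomial.funext
    intro y
    simp only [eval_mul, eval_sub, eval_C, eval_X, evalQ]
    exact key x y
  set R : ℕ → Polynomial ℝ := fun k => ∑ n ∈ Finset.Icc 1 p.natDegree,
      C (p.coeff n) * ∑ j ∈ Finset.range n,
        C ((derivative^[k] (X ^ j : Polynomial ℝ)).eval α₂) * X ^ (n - 1 - j) with hRdef
  have evalR : ∀ (k : ℕ) (x : ℝ), (derivative^[k] (Q x)).eval α₂ = (R k).eval x := by
    intro k x
    rw [hQ, hRdef]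
    simp only [iterate_derivative_sum, iterate_derivative_C_mul, eval_finset_sum, eval_mul,
      eval_C, eval_pow, eval_X]
    exact Finset.sum_congr rfl fun n _ => congrArg _
      (Finset.sum_congr rfl fun j _ => mul_comm _ _)
  have hfun : ∀ k : ℕ, (fun x => iteratedDeriv k (fun y => secQ p x y) α₂)
      = fun x => (R k).eval x := by
    intro k
    funext x
    have h0 : (fun y => secQ p x y) = fun y => (Q x).eval y :=
      funext fun y => (evalQ x y).symm
    rw [h0, iteratedDeriv_polyEval]
    exact evalR k x
  -- recursion between R (t+1) and R t
  have hRrec : (X - C α₂) * R (t + 1) - C ((t : ℝ) + 1) * R t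
      = C (-(derivative^[t + 1] p).eval α₂) := by
    apply Polynomial.funext
    intro x
    have hL := iter_deriv_linfac (C x - X) (-1) (by simp) (Q x) t
    have hRside : derivative^[t + 1] (C (p.eval x) - p) = -derivative^[t + 1] p := by
      rw [iterate_derivative_sub, iterate_derivative_C (Nat.succ_pos t), zero_sub]
    have h2 : (C x - X) * derivative^[t + 1] (Q x)
        + C (((t : ℝ) + 1) * (-1)) * derivative^[t] (Q x) = -derivative^[t + 1] p := by
      rw [← hL, polyId x, hRside]
    have h3 := congrArg (eval α₂) h2
    simp only [eval_add, eval_mul, eval_sub, eval_C, eval_X, eval_neg] at h3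
    rw [evalR, evalR] at h3
    simp only [eval_sub, eval_mul, eval_C, eval_X]
    linear_combination h3
  have hL2 := iter_deriv_linfac (X - C α₂) 1 (by simp) (R (t + 1)) s
  have hfin : (α₁ - α₂) * (derivative^[s + 1] (R (t + 1))).eval α₁
      + ((s : ℝ) + 1) * (derivative^[s] (R (t + 1))).eval α₁
      - ((t : ℝ) + 1) * (derivative^[s + 1] (R t)).eval α₁ = 0 := by
    have h4 := congrArg (fun P => (derivative^[s + 1] P).eval α₁) hRrec
    simp only [iterate_derivative_sub, iterate_derivative_C_mul,
      iterate_derivative_C (Nat.succ_pos s), hL2] at h4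
    simp only [eval_sub, eval_add, eval_mul, eval_C, eval_X, eval_zero] at h4
    linear_combination h4
  rw [hs]
  simp only [Nat.add_sub_cancel]
  rw [hfun (t + 1), hfun t, iteratedDeriv_polyEval, iteratedDeriv_polyEval,
    iteratedDeriv_polyEval]
  beta_reduce
  push_cast
  refine mul_left_cancel₀ hne' ?_
  rw [← mul_assoc, mul_one_div, div_self hne', one_mul]
  linear_combination hfin
end

section
/- Let p be a real polynomial and α a real root of p of odd multiplicity d ≥ 3. Let γ(t) = (α + ξ(t), α + μ(t)) be a smooth curve with ξ(t) = t + O(t²) and μ(t) = m·t + O(t²) for some real slope m. Then the second component of the secant map along γ, namely N(γ(t))/D(γ(t)) where D(x,y) = (p(x)-p(y))/(x-y) and N(x,y) = y·D(x,y) - p(y), tends to α as t → 0. -/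
open Filter Asymptotics

/-- The numerator `N(x,y) = y D(x,y) - p(y)` of the second component of the secant map. -/
noncomputable def secN (p : Polynomial ℝ) (x y : ℝ) : ℝ :=
  y * secQ p x y - p.eval y

lemma geomG (x y : ℝ) (n : ℕ) :
    (x - y) * ∑ ℓ ∈ Finset.range n, x ^ (n - 1 - ℓ) * y ^ ℓ = x ^ n - y ^ n := by
  have h := geom_sum₂_mul y x n
  have h2 : ∑ ℓ ∈ Finset.range n, x ^ (n - 1 - ℓ) * y ^ ℓ
      = ∑ i ∈ Finset.range n, y ^ i * x ^ (n - 1 - i) :=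
    Finset.sum_congr rfl fun i _ => mul_comm _ _
  rw [h2]
  calc (x - y) * ∑ i ∈ Finset.range n, y ^ i * x ^ (n - 1 - i)
      = -((∑ i ∈ Finset.range n, y ^ i * x ^ (n - 1 - i)) * (y - x)) := by ring
    _ = -(y ^ n - x ^ n) := by rw [h]
    _ = x ^ n - y ^ n := by ring

lemma secQ_key (p : Polynomial ℝ) (x y : ℝ) :
    (x - y) * secQ p x y = p.eval x - p.eval y := by
  unfold secQ
  rw [Finset.mul_sum]
  rw [Finset.sum_congr rfl (fun m _ =>
    show (x - y) * (p.coeff m * ∑ ℓ ∈ Finset.range m, x ^ (m - 1 - ℓ) * y ^ ℓ)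
        = p.coeff m * (x ^ m - y ^ m) by rw [← geomG x y m]; ring)]
  have hext : ∑ m ∈ Finset.Icc 1 p.natDegree, p.coeff m * (x ^ m - y ^ m)
      = ∑ m ∈ Finset.range (p.natDegree + 1), p.coeff m * (x ^ m - y ^ m) := by
    apply Finset.sum_subset
    · intro a ha; simp only [Finset.mem_Icc] at ha; simp only [Finset.mem_range]; omega
    · intro a ha ha'
      have : a = 0 := by
        simp only [Finset.mem_range] at ha; simp only [Finset.mem_Icc] at ha'; omega
      subst this; simp
  rw [hext, Polynomial.eval_eq_sum_range, Polynomial.eval_eq_sum_range, ← Finset.sum_sub_distrib]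
  exact Finset.sum_congr rfl fun m _ => by ring

lemma secQ_taylor (p : Polynomial ℝ) (α u v : ℝ) :
    secQ p (α + u) (α + v) =
      ∑ j ∈ Finset.range (p.natDegree + 1), (Polynomial.taylor α p).coeff j *
        ∑ ℓ ∈ Finset.range j, u ^ (j - 1 - ℓ) * v ^ ℓ := by
  have key : ∀ w : ℝ, w ≠ v → secQ p (α + w) (α + v) =
      ∑ j ∈ Finset.range (p.natDegree + 1), (Polynomial.taylor α p).coeff j *
        ∑ ℓ ∈ Finset.range j, w ^ (j - 1 - ℓ) * v ^ ℓ := by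
    intro w hw
    have hsub : (w : ℝ) - v ≠ 0 := sub_ne_zero.mpr hw
    apply mul_left_cancel₀ hsub
    have h1 : (w - v) * secQ p (α + w) (α + v) = p.eval (α + w) - p.eval (α + v) := by
      have := secQ_key p (α + w) (α + v)
      have hxy : (α + w) - (α + v) = w - v := by ring
      rwa [hxy] at this
    rw [h1, Finset.mul_sum]
    rw [Finset.sum_congr rfl (fun j _ =>
      show (w - v) * ((Polynomial.taylor α p).coeff j *
            ∑ ℓ ∈ Finset.range j, w ^ (j - 1 - ℓ) * v ^ ℓ)
          = (Polynomial.taylor α p).coeff j * (w ^ j - v ^ j) by rw [← geomG w v j]; ring)]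
    have hev : ∀ s : ℝ, p.eval (α + s) = ∑ j ∈ Finset.range (p.natDegree + 1),
        (Polynomial.taylor α p).coeff j * s ^ j := by
      intro s
      have h2 : (Polynomial.taylor α p).eval s = p.eval (s + α) := Polynomial.taylor_eval α p s
      rw [add_comm α s, ← h2, Polynomial.eval_eq_sum_range, Polynomial.natDegree_taylor]
    rw [hev w, hev v, ← Finset.sum_sub_distrib]
    exact Finset.sum_congr rfl fun j _ => by ring
  rcases eq_or_ne u v with h | h
  · -- continuity
    have hF : Continuous fun w : ℝ => secQ p (α + w) (α + v) := by
      unfold secQ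
      exact continuous_finset_sum _ fun m _ => continuous_const.mul
        (continuous_finset_sum _ fun ℓ _ =>
          ((continuous_const.add continuous_id).pow _).mul continuous_const)
    have hG : Continuous fun w : ℝ => ∑ j ∈ Finset.range (p.natDegree + 1),
        (Polynomial.taylor α p).coeff j * ∑ ℓ ∈ Finset.range j, w ^ (j - 1 - ℓ) * v ^ ℓ :=
      continuous_finset_sum _ fun j _ => continuous_const.mul
        (continuous_finset_sum _ fun ℓ _ => (continuous_pow _).mul continuous_const)
    have := Continuous.ext_on (dense_compl_singleton v) hF hG fun w hw => key w hw
    exact congrFun this u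
  · exact key u h

lemma iterderiv_poly (p : Polynomial ℝ) (n : ℕ) :
    iteratedDeriv n (fun t => p.eval t) = fun t => (Polynomial.derivative^[n] p).eval t := by
  induction n with
  | zero => simp
  | succ n ih =>
    rw [iteratedDeriv_succ, ih]
    funext t
    rw [Function.iterate_succ_apply']
    exact Polynomial.deriv _

lemma taylor_coeff_eq (p : Polynomial ℝ) (α : ℝ) (j : ℕ) :
    (j.factorial : ℝ) * (Polynomial.taylor α p).coeff j
      = iteratedDeriv j (fun t => p.eval t) α := by
  rw [Polynomial.taylor_coeff, iterderiv_poly]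
  have h := congrFun (Polynomial.factorial_smul_hasseDeriv (R := ℝ) (k := j)) p
  simp only [LinearMap.smul_apply] at h
  rw [← h]
  simp [nsmul_eq_mul]

lemma slope_tendsto (m : ℝ) (μ : ℝ → ℝ)
    (hμ : (fun t => μ t - m * t) =O[nhds 0] fun t => t ^ 2) :
    Tendsto (fun t => μ t / t) (nhdsWithin 0 {(0:ℝ)}ᶜ) (nhds m) := by
  have O1 : (fun t => μ t - m * t) =O[nhdsWithin 0 {(0:ℝ)}ᶜ] fun t => t ^ 2 :=
    hμ.mono nhdsWithin_le_nhds
  have O2 : (fun t => (μ t - m * t) * t⁻¹) =O[nhdsWithin 0 {(0:ℝ)}ᶜ]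
      fun t => t ^ 2 * t⁻¹ := O1.mul (isBigO_refl _ _)
  have O3 : (fun t => μ t / t - m) =O[nhdsWithin 0 {(0:ℝ)}ᶜ] fun t => t := by
    refine O2.congr' ?_ ?_
    · filter_upwards [self_mem_nhdsWithin] with t ht
      have ht' : (t : ℝ) ≠ 0 := ht
      field_simp
    · filter_upwards [self_mem_nhdsWithin] with t ht
      have ht' : (t : ℝ) ≠ 0 := ht
      field_simp [pow_two]
  have htend : Tendsto (fun t : ℝ => t) (nhdsWithin 0 {(0:ℝ)}ᶜ) (nhds 0) :=
    tendsto_id.mono_left nhdsWithin_le_nhds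
  have := O3.trans_tendsto htend
  have h := this.add_const m
  simpa using h

/-- Let `α` be a real root of `p` of odd multiplicity `d ≥ 3` and let
`γ(t) = (α + ξ(t), α + μ(t))` be a smooth curve with `ξ(t) = t + O(t²)`,
`μ(t) = m t + O(t²)`. Then `N(γ(t))/D(γ(t)) → α` as `t → 0`. -/
theorem secant_limit_odd_multiplicity (p : Polynomial ℝ) (α : ℝ) (d : ℕ)
    (hd3 : 3 ≤ d) (hodd : Odd d)
    (hroot : ∀ j : ℕ, j < d → iteratedDeriv j (fun t => p.eval t) α = 0)
    (hd0 : iteratedDeriv d (fun t => p.eval t) α ≠ 0)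
    (m : ℝ) (ξ μ : ℝ → ℝ)
    (hξs : ContDiff ℝ (⊤ : ℕ∞) ξ) (hμs : ContDiff ℝ (⊤ : ℕ∞) μ)
    (hξ : (fun t => ξ t - t) =O[nhds 0] fun t => t ^ 2)
    (hμ : (fun t => μ t - m * t) =O[nhds 0] fun t => t ^ 2) :
    Tendsto (fun t => secN p (α + ξ t) (α + μ t) / secQ p (α + ξ t) (α + μ t))
      (nhdsWithin 0 {(0 : ℝ)}ᶜ) (nhds α) := by
  set k := p.natDegree with hk
  set P := Polynomial.taylor α p with hPdef
  set l := nhdsWithin (0:ℝ) {(0:ℝ)}ᶜ with hl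
  -- coefficient facts
  have hPlt : ∀ j, j < d → P.coeff j = 0 := by
    intro j hj
    have h := taylor_coeff_eq p α j
    rw [hroot j hj] at h
    have hfac : (j.factorial : ℝ) ≠ 0 := Nat.cast_ne_zero.mpr j.factorial_ne_zero
    exact (mul_eq_zero.mp h).resolve_left hfac
  have hPd : P.coeff d ≠ 0 := by
    intro h
    apply hd0
    rw [← taylor_coeff_eq p α d, ← hPdef, h, mul_zero]
  have hdk : d ≤ k := by
    have := Polynomial.le_natDegree_of_ne_zero hPd
    rwa [hPdef, Polynomial.natDegree_taylor] at this
  -- slope limits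
  have hξt : Tendsto (fun t => ξ t / t) l (nhds 1) := by
    have := slope_tendsto 1 ξ (by simpa using hξ)
    simpa using this
  have hμt : Tendsto (fun t => μ t / t) l (nhds m) := slope_tendsto m μ hμ
  have hμ0 : μ 0 = 0 := by
    obtain ⟨C, hC⟩ := hμ.isBigOWith
    have h0 := hC.bound.self_of_nhds
    simp only [mul_zero, sub_zero, norm_zero] at h0
    have : ‖μ 0‖ ≤ 0 := by simpa using h0
    simpa using le_antisymm this (norm_nonneg _)
  have ht0 : ∀ᶠ t in l, (t : ℝ) ≠ 0 := self_mem_nhdsWithin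
  -- the homogeneous sums
  set S : ℕ → ℝ → ℝ := fun j t => ∑ ℓ ∈ Finset.range j, (ξ t) ^ (j - 1 - ℓ) * (μ t) ^ ℓ
    with hSdef
  have hS_eq : ∀ j, 1 ≤ j → ∀ t : ℝ, S j t / t ^ (j - 1)
      = ∑ ℓ ∈ Finset.range j, (ξ t / t) ^ (j - 1 - ℓ) * (μ t / t) ^ ℓ := by
    intro j hj t
    rw [hSdef]
    simp only
    rw [Finset.sum_div]
    refine Finset.sum_congr rfl fun ℓ hℓ => ?_
    have hℓ' : ℓ < j := Finset.mem_range.mp hℓ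
    have ha : (j - 1 - ℓ) + ℓ = j - 1 := by omega
    rw [div_pow, div_pow, div_mul_div_comm, ← pow_add, ha]
  have hSj : ∀ j, 1 ≤ j → Tendsto (fun t => S j t / t ^ (j - 1)) l
      (nhds (∑ ℓ ∈ Finset.range j, m ^ ℓ)) := by
    intro j hj
    have h1 : Tendsto (fun t => ∑ ℓ ∈ Finset.range j, (ξ t / t) ^ (j - 1 - ℓ) * (μ t / t) ^ ℓ)
        l (nhds (∑ ℓ ∈ Finset.range j, (1:ℝ) ^ (j - 1 - ℓ) * m ^ ℓ)) :=
      tendsto_finset_sum _ fun ℓ _ => (hξt.pow _).mul (hμt.pow _)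
    simp only [one_pow, one_mul] at h1
    exact h1.congr fun t => (hS_eq j hj t).symm
  -- Q expansion along the curve
  have hQexp : ∀ t : ℝ, secQ p (α + ξ t) (α + μ t)
      = ∑ j ∈ Finset.range (k + 1), P.coeff j * S j t := fun t => secQ_taylor p α (ξ t) (μ t)
  set c : ℝ := ∑ ℓ ∈ Finset.range d, m ^ ℓ with hc
  have hcpos : 0 < c := hodd.geom_sum_pos
  set Lq : ℝ := P.coeff d * c with hLq
  have hLqne : Lq ≠ 0 := mul_ne_zero hPd (ne_of_gt hcpos)
  have hQ : Tendsto (fun t => secQ p (α + ξ t) (α + μ t) / t ^ (d - 1)) l (nhds Lq) := by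
    have hterm : ∀ j ∈ Finset.range (k + 1),
        Tendsto (fun t => P.coeff j * S j t / t ^ (d - 1)) l
          (nhds (if j = d then Lq else 0)) := by
      intro j _
      rcases lt_trichotomy j d with hjd | hjd | hjd
      · rw [if_neg (by omega)]
        simp only [hPlt j hjd, zero_mul, zero_div]
        exact tendsto_const_nhds
      · subst hjd
        rw [if_pos rfl, hLq]
        have := (hSj j (by omega)).const_mul (P.coeff j)
        exact this.congr fun t => by rw [mul_div_assoc]
      · rw [if_neg (by omega)]
        have hlim : Tendsto (fun t => (P.coeff j * (S j t / t ^ (j - 1))) * t ^ (j - d)) l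
            (nhds 0) := by
          have h1 := (hSj j (by omega)).const_mul (P.coeff j)
          have h2 : Tendsto (fun t : ℝ => t ^ (j - d)) l (nhds 0) := by
            have := ((continuous_pow (j - d)).tendsto (0:ℝ)).mono_left
              (nhdsWithin_le_nhds (s := {(0:ℝ)}ᶜ))
            rwa [zero_pow (by omega : j - d ≠ 0)] at this
          have := h1.mul h2
          rwa [mul_zero] at this
        refine hlim.congr' ?_
        filter_upwards [ht0] with t ht
        have hpow : t ^ (j - 1) = t ^ (d - 1) * t ^ (j - d) := by
          rw [← pow_add]; congr 1; omega
        have htd : (t : ℝ) ^ (d - 1) ≠ 0 := pow_ne_zero _ ht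
        have htjd : (t : ℝ) ^ (j - d) ≠ 0 := pow_ne_zero _ ht
        field_simp [hpow]
        rw [hpow]; ring
    have hsum := tendsto_finset_sum _ hterm
    have hval : ∑ j ∈ Finset.range (k + 1), (if j = d then Lq else 0) = Lq := by
      rw [Finset.sum_ite_eq' (Finset.range (k + 1)) d (fun _ => Lq)]
      rw [if_pos (Finset.mem_range.mpr (by omega))]
    rw [hval] at hsum
    refine hsum.congr fun t => ?_
    rw [hQexp t, Finset.sum_div]
  -- numerator limit
  have hg : Tendsto (fun t => p.eval (α + μ t) / t ^ (d - 1)) l (nhds 0) := by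
    have hev : ∀ s : ℝ, p.eval (α + s) = ∑ j ∈ Finset.range (k + 1), P.coeff j * s ^ j := by
      intro s
      have h2 : P.eval s = p.eval (s + α) := Polynomial.taylor_eval α p s
      rw [add_comm α s, ← h2, hPdef, Polynomial.eval_eq_sum_range, Polynomial.natDegree_taylor]
    have hterm : ∀ j ∈ Finset.range (k + 1),
        Tendsto (fun t => P.coeff j * (μ t) ^ j / t ^ (d - 1)) l (nhds 0) := by
      intro j _
      rcases lt_or_ge j d with hjd | hjd
      · simp only [hPlt j hjd, zero_mul, zero_div]
        exact tendsto_const_nhds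
      · have hlim : Tendsto (fun t => (P.coeff j * (μ t / t) ^ j) * t ^ (j - (d - 1))) l
            (nhds 0) := by
          have h1 := (hμt.pow j).const_mul (P.coeff j)
          have h2 : Tendsto (fun t : ℝ => t ^ (j - (d - 1))) l (nhds 0) := by
            have := ((continuous_pow (j - (d - 1))).tendsto (0:ℝ)).mono_left
              (nhdsWithin_le_nhds (s := {(0:ℝ)}ᶜ))
            rwa [zero_pow (by omega : j - (d - 1) ≠ 0)] at this
          have := h1.mul h2
          rwa [mul_zero] at this
        refine hlim.congr' ?_
        filter_upwards [ht0] with t ht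
        have hpow : t ^ j = t ^ (d - 1) * t ^ (j - (d - 1)) := by
          rw [← pow_add]; congr 1; omega
        have htd : (t : ℝ) ^ (d - 1) ≠ 0 := pow_ne_zero _ ht
        have htjd : (t : ℝ) ^ (j - (d - 1)) ≠ 0 := pow_ne_zero _ ht
        rw [div_pow]
        field_simp [hpow]
        rw [hpow]; ring
    have hsum := tendsto_finset_sum _ hterm
    simp only [Finset.sum_const_zero] at hsum
    refine hsum.congr fun t => ?_
    rw [hev (μ t), Finset.sum_div]
  -- Q eventually nonzero
  have hQne : ∀ᶠ t in l, secQ p (α + ξ t) (α + μ t) ≠ 0 := by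
    filter_upwards [hQ.eventually_ne hLqne] with t ht
    intro h
    apply ht
    rw [h, zero_div]
  -- μ tends to 0
  have hμ0t : Tendsto (fun t => μ t) l (nhds 0) := by
    have := (hμs.continuous.tendsto 0).mono_left (nhdsWithin_le_nhds (s := {(0:ℝ)}ᶜ))
    rwa [hμ0] at this
  -- final assembly
  have hfinal : Tendsto (fun t => (α + μ t) -
      (p.eval (α + μ t) / t ^ (d - 1)) / (secQ p (α + ξ t) (α + μ t) / t ^ (d - 1))) l
      (nhds α) := by
    have h1 : Tendsto (fun t => α + μ t) l (nhds (α + 0)) := tendsto_const_nhds.add hμ0t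
    have h2 := hg.div hQ hLqne
    rw [zero_div] at h2
    have := h1.sub h2
    rwa [add_zero, sub_zero] at this
  refine hfinal.congr' ?_
  filter_upwards [ht0, hQne] with t ht hQt
  have htd : (t : ℝ) ^ (d - 1) ≠ 0 := pow_ne_zero _ ht
  rw [secN]
  field_simp
end

section
/- Let p be a real polynomial, α a multiple root of p (p(α) = p'(α) = 0, p''(α) may be computed), and β a simple real root of p (p(β) = 0, p'(β) ≠ 0). Consider the curve γ_κ(t) = (α + t + t²/2, β + κt²/2). Then as t → 0, the second component of the secant map along γ_κ tends to (β·p''(α) - α·p'(β)·κ)/(p''(α) - p'(β)·κ), provided p''(α) - p'(β)·κ ≠ 0; i.e., lim_{t→0} N(γ_κ(t))/D(γ_κ(t)) equals this value, where D = q is the divided difference polynomial and N(x,y) = y·q(x,y) - p(y). -/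
open Filter

lemma secQ_inner (x y : ℝ) (m : ℕ) :
    (∑ ℓ ∈ Finset.range m, x ^ (m - 1 - ℓ) * y ^ ℓ) * (x - y) = x ^ m - y ^ m := by
  have h := geom_sum₂_mul y x m
  have h2 : (∑ ℓ ∈ Finset.range m, x ^ (m - 1 - ℓ) * y ^ ℓ)
      = ∑ i ∈ Finset.range m, y ^ i * x ^ (m - 1 - i) :=
    Finset.sum_congr rfl fun i _ => mul_comm _ _
  rw [h2]
  linear_combination -h

lemma secQ_mul_sub (p : Polynomial ℝ) (x y : ℝ) :
    secQ p x y * (x - y) = p.eval x - p.eval y := by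
  rw [secQ, Finset.sum_mul]
  have h1 : ∀ m ∈ Finset.Icc 1 p.natDegree,
      p.coeff m * (∑ ℓ ∈ Finset.range m, x ^ (m - 1 - ℓ) * y ^ ℓ) * (x - y)
        = p.coeff m * x ^ m - p.coeff m * y ^ m := by
    intro m _
    rw [mul_assoc, secQ_inner]
    ring
  rw [Finset.sum_congr rfl h1]
  rw [Polynomial.eval_eq_sum_range, Polynomial.eval_eq_sum_range, ← Finset.sum_sub_distrib]
  refine Finset.sum_subset ?_ ?_
  · intro m hm
    simp only [Finset.mem_Icc] at hm
    simp only [Finset.mem_range]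
    omega
  · intro m hm hnm
    simp only [Finset.mem_range] at hm
    simp only [Finset.mem_Icc] at hnm
    have : m = 0 := by omega
    subst this
    simp

/-- Let `α` be a multiple root of `p` (`p(α) = p'(α) = 0`) and `β ≠ α` a simple root
(`p(β) = 0`, `p'(β) ≠ 0`). Along the curve `γ_κ(t) = (α + t + t²/2, β + κ t²/2)`, provided
`p''(α) - p'(β) κ ≠ 0`, the second component of the secant map tends to
`(β p''(α) - α p'(β) κ)/(p''(α) - p'(β) κ)` as `t → 0`. -/
theorem secant_limit_at_mixed_focal_point (p : Polynomial ℝ) (α β : ℝ)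
    (hα0 : p.eval α = 0) (hα1 : deriv (fun t => p.eval t) α = 0)
    (hβ0 : p.eval β = 0) (hβ1 : deriv (fun t => p.eval t) β ≠ 0)
    (hne : α ≠ β) (κ : ℝ)
    (hκ : iteratedDeriv 2 (fun t => p.eval t) α - deriv (fun t => p.eval t) β * κ ≠ 0) :
    Tendsto (fun t : ℝ =>
        secN p (α + t + t ^ 2 / 2) (β + κ * t ^ 2 / 2) /
          secQ p (α + t + t ^ 2 / 2) (β + κ * t ^ 2 / 2))
      (nhdsWithin 0 {(0 : ℝ)}ᶜ)
      (nhds ((β * iteratedDeriv 2 (fun t => p.eval t) α -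
              α * deriv (fun t => p.eval t) β * κ) /
             (iteratedDeriv 2 (fun t => p.eval t) α -
              deriv (fun t => p.eval t) β * κ))) := by
  classical
  have hderiv : ∀ z : ℝ, deriv (fun t => p.eval t) z = p.derivative.eval z :=
    fun z => p.deriv
  have hα1' : p.derivative.eval α = 0 := by rw [← hderiv]; exact hα1
  obtain ⟨u, hu⟩ : Polynomial.X - Polynomial.C α ∣ p := Polynomial.dvd_iff_isRoot.2 hα0
  have huα : u.eval α = 0 := by
    have h := hα1'
    rw [hu] at h
    simpa using h
  obtain ⟨r, hrr⟩ : Polynomial.X - Polynomial.C α ∣ u := Polynomial.dvd_iff_isRoot.2 huα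
  have hp : p = (Polynomial.X - Polynomial.C α) ^ 2 * r := by rw [hu, hrr]; ring
  obtain ⟨s, hs⟩ : Polynomial.X - Polynomial.C β ∣ p := Polynomial.dvd_iff_isRoot.2 hβ0
  -- derivative values
  have hP1 : deriv (fun t => p.eval t) β = s.eval β := by
    rw [hderiv, hs]
    simp
  have hit2 : iteratedDeriv 2 (fun t => p.eval t) α = p.derivative.derivative.eval α := by
    have h1 : deriv (fun t => p.eval t) = fun z => p.derivative.eval z :=
      funext fun z => p.deriv
    rw [show (2:ℕ) = 1 + 1 from rfl, iteratedDeriv_succ, iteratedDeriv_one, h1]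
    exact p.derivative.deriv
  have hP2 : iteratedDeriv 2 (fun t => p.eval t) α = 2 * r.eval α := by
    rw [hit2, hp]
    simp [Polynomial.derivative_mul, Polynomial.derivative_pow]
  have hβ1' : s.eval β ≠ 0 := by rw [← hP1]; exact hβ1
  have hκ' : 2 * r.eval α - s.eval β * κ ≠ 0 := by
    rw [hP2, hP1] at hκ; exact hκ
  -- curve components
  set xx : ℝ → ℝ := fun t => α + t + t ^ 2 / 2 with hxx
  set yy : ℝ → ℝ := fun t => β + κ * t ^ 2 / 2 with hyy
  set G : ℝ → ℝ := fun t => (1 + t / 2) ^ 2 * r.eval (xx t) - κ / 2 * s.eval (yy t) with hG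
  set B : ℝ → ℝ := fun t => G t / (xx t - yy t) with hB
  set A : ℝ → ℝ := fun t => yy t * B t - κ / 2 * s.eval (yy t) with hA
  have hxxc : Continuous xx := by fun_prop
  have hyyc : Continuous yy := by fun_prop
  have hGc : Continuous G := by
    apply Continuous.sub
    · exact (by fun_prop : Continuous fun t : ℝ => (1 + t / 2) ^ 2).mul
        (r.continuous.comp hxxc)
    · exact continuous_const.mul (s.continuous.comp hyyc)
  have hsubne : α - β ≠ 0 := sub_ne_zero.2 hne
  have hxy0 : xx 0 - yy 0 = α - β := by simp [hxx, hyy]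
  have hBc : ContinuousAt B 0 := by
    apply ContinuousAt.div hGc.continuousAt (hxxc.sub hyyc).continuousAt
    rw [Pi.sub_apply, hxy0]; exact hsubne
  have hAc : ContinuousAt A 0 := by
    exact (hyyc.continuousAt.mul hBc).sub
      (continuousAt_const.mul ((s.continuous.comp hyyc)).continuousAt)
  have hG0 : G 0 = r.eval α - κ / 2 * s.eval β := by simp [hG, hxx, hyy]
  have hG0ne : G 0 ≠ 0 := by
    rw [hG0]
    intro h; apply hκ'; linarith
  have hB0ne : B 0 ≠ 0 := by
    rw [hB]
    simp only [hxy0]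
    exact div_ne_zero hG0ne hsubne
  have htend : Tendsto (fun t => A t / B t) (nhdsWithin 0 {(0:ℝ)}ᶜ) (nhds (A 0 / B 0)) :=
    ((hAc.div hBc hB0ne).tendsto).mono_left nhdsWithin_le_nhds
  -- eventual equality
  have hxyne : ∀ᶠ t in nhds (0:ℝ), xx t - yy t ≠ 0 := by
    have : ContinuousAt (fun t => xx t - yy t) 0 := (hxxc.sub hyyc).continuousAt
    exact this.eventually_ne (by rw [hxy0]; exact hsubne)
  have hev : ∀ᶠ t in nhdsWithin 0 {(0:ℝ)}ᶜ,
      secN p (α + t + t ^ 2 / 2) (β + κ * t ^ 2 / 2) /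
        secQ p (α + t + t ^ 2 / 2) (β + κ * t ^ 2 / 2) = A t / B t := by
    filter_upwards [hxyne.filter_mono nhdsWithin_le_nhds, self_mem_nhdsWithin]
      with t hxyt ht0
    have ht0' : (t : ℝ) ≠ 0 := ht0
    have hpx : p.eval (xx t) = t ^ 2 * ((1 + t / 2) ^ 2 * r.eval (xx t)) := by
      rw [hp]
      simp only [Polynomial.eval_mul, Polynomial.eval_pow, Polynomial.eval_sub,
        Polynomial.eval_X, Polynomial.eval_C, hxx]
      ring
    have hpy : p.eval (yy t) = t ^ 2 * (κ / 2 * s.eval (yy t)) := by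
      rw [hs]
      simp only [Polynomial.eval_mul, Polynomial.eval_sub, Polynomial.eval_X,
        Polynomial.eval_C, hyy]
      ring
    have hq : secQ p (xx t) (yy t) = t ^ 2 * B t := by
      rw [hB]
      rw [mul_div_assoc', eq_div_iff hxyt, secQ_mul_sub, hpx, hpy, hG]
      ring
    have hn : secN p (xx t) (yy t) = t ^ 2 * A t := by
      rw [secN, hq, hpy, hA]
      ring
    have hxxt : α + t + t ^ 2 / 2 = xx t := rfl
    have hyyt : β + κ * t ^ 2 / 2 = yy t := rfl
    rw [hxxt, hyyt, hq, hn, mul_div_mul_left _ _ (pow_ne_zero 2 ht0')]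
  -- identify the limit value
  have hval : A 0 / B 0 =
        (β * iteratedDeriv 2 (fun t => p.eval t) α -
          α * deriv (fun t => p.eval t) β * κ) /
        (iteratedDeriv 2 (fun t => p.eval t) α - deriv (fun t => p.eval t) β * κ) := by
    rw [hP2, hP1]
    have hy0 : yy 0 = β := by simp [hyy]
    have hB0 : B 0 = (r.eval α - κ / 2 * s.eval β) / (α - β) := by
      rw [hB]
      simp only [hxy0, hG0]
    have hgne : Polynomial.eval α r - κ / 2 * Polynomial.eval β s ≠ 0 := by
      intro h; apply hκ'; linarith
    simp only [hA, hy0, hB0]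
    rw [div_eq_div_iff (div_ne_zero hgne hsubne) hκ']
    field_simp
    ring
  rw [← hval]
  exact Tendsto.congr' (Filter.EventuallyEq.symm hev) htend
end
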